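/- With the notation of the vortex-blob discretization (ω ∈ L¹(ℝ²), ℓ = ε⁴, Γ_i = ∫_{Q_i} ω, ω_ε = Σ_i Γ_i φ_ε(·−α_i)), one has the L^∞ bound ‖ω_ε − φ_ε ∗ ω‖_{L^∞(ℝ²)} ≤ √2 (ℓ/ε³) ‖∇φ‖_{L^∞} ‖ω‖_{L¹} = √2 ε ‖∇φ‖_{L^∞} ‖ω‖_{L¹}, and by interpolation, for every 1 ≤ p ≤ ∞, ‖ω_ε − φ_ε ∗ ω‖_{L^p} ≤ C ‖ω‖_{L¹} ε^{1 + 2/p} for a constant C depending only on ‖∇φ‖_{L¹} and ‖∇φ‖_{L^∞}. -/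

import Mathlib

open MeasureTheory

/-- Square of side `ℓ` centered at the lattice point `ℓ i`. -/
def blobSquare (ℓ : ℝ) (i : ℤ × ℤ) : Set (ℝ × ℝ) :=
  Set.Ico (ℓ * (i.1 : ℝ) - ℓ / 2) (ℓ * (i.1 : ℝ) + ℓ / 2) ×ˢ
    Set.Ico (ℓ * (i.2 : ℝ) - ℓ / 2) (ℓ * (i.2 : ℝ) + ℓ / 2)

/-- Rescaled mollifier `φ_ε(x) = ε⁻² φ(x/ε)`. -/
noncomputable def mollifier (φ : ℝ × ℝ → ℝ) (ε : ℝ) (x : ℝ × ℝ) : ℝ :=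
  (ε ^ 2)⁻¹ * φ (ε⁻¹ • x)

/-- The vortex-blob approximation `ω_ε = Σ_i (∫_{Q_i} ω) φ_ε(· − α_i)` with `ℓ = ε⁴`. -/
noncomputable def blobApprox (φ : ℝ × ℝ → ℝ) (ω : ℝ × ℝ → ℝ) (ε : ℝ) (x : ℝ × ℝ) : ℝ :=
  ∑' i : ℤ × ℤ, (∫ y in blobSquare (ε ^ 4) i, ω y) *
    mollifier φ ε (x - ((ε ^ 4) * (i.1 : ℝ), (ε ^ 4) * (i.2 : ℝ)))

/-- `φ_ε ∗ ω`. -/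
noncomputable def mollified (φ : ℝ × ℝ → ℝ) (ω : ℝ × ℝ → ℝ) (ε : ℝ) (x : ℝ × ℝ) : ℝ :=
  ∫ y, mollifier φ ε (x - y) * ω y

/-!
Let `c(y)` be the centre of the square of side `ℓ = ε⁴` containing `y`. Summing over the squares,
`ω_ε(x) = ∫ φ_ε(x - c(y)) ω(y) dy`, so `ω_ε - φ_ε ∗ ω` is `ω` integrated against the change of
`φ_ε` under a shift of its argument by `|c(y) - y| ≤ ℓ/2`. As `φ_ε` is `‖∇φ‖_∞ ε⁻³`-Lipschitz,
this is pointwise at most `(ε/2) ‖∇φ‖_∞ ‖ω‖₁`. Integrating in `x` first, the two shifted copies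
of `φ_ε` live on a set of measure `2 ε² |supp φ|`, which gives `‖∇φ‖_∞ |supp φ| ‖ω‖₁ ε³` in `L¹`.
The `Lᵖ` bound follows from `‖f‖_p ≤ ‖f‖_∞^{1-1/p} ‖f‖₁^{1/p}`.
-/

open Function ENNReal NNReal Pointwise

lemma ContDiff.lipschitzWith_iSup_nnnorm_fderiv {E F : Type*} [NormedAddCommGroup E]
    [NormedSpace ℝ E] [NormedAddCommGroup F] [NormedSpace ℝ F] {f : E → F}
    (hf : ContDiff ℝ 1 f) (hfc : HasCompactSupport f) :
    LipschitzWith (⨆ z, ‖fderiv ℝ f z‖₊) f := by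
  obtain ⟨C, hC⟩ := (hfc.fderiv ℝ).exists_bound_of_continuous (hf.continuous_fderiv one_ne_zero)
  have hbdd : BddAbove (Set.range fun z => ‖fderiv ℝ f z‖₊) := by
    refine ⟨C.toNNReal, ?_⟩
    rintro _ ⟨z, rfl⟩
    exact (Real.le_toNNReal_iff_coe_le ((norm_nonneg _).trans (hC z))).2 (hC z)
  exact lipschitzWith_of_nnnorm_fderiv_le (hf.differentiable one_ne_zero) (le_ciSup hbdd)

section PerturbedConvolution

variable {G : Type*} [NormedAddCommGroup G] [MeasurableSpace G] {μ : Measure G}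
  {g ω : G → ℝ} {q : G → G} {K : ℝ≥0} {δ : ℝ}

lemma abs_integral_sub_comp_sub_mul_le (hg : LipschitzWith K g) (hq : ∀ y, ‖q y - y‖ ≤ δ)
    (hω : Integrable ω μ) (x : G) :
    |∫ y, (g (x - q y) - g (x - y)) * ω y ∂μ| ≤ K * δ * ∫ y, |ω y| ∂μ := by
  rw [← Real.norm_eq_abs, ← integral_const_mul]
  refine norm_integral_le_of_norm_le (hω.abs.const_mul _) (.of_forall fun y => ?_)
  rw [norm_mul, Real.norm_eq_abs, Real.norm_eq_abs]
  gcongr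
  calc |g (x - q y) - g (x - y)| ≤ K * ‖(x - q y) - (x - y)‖ := hg.norm_sub_le _ _
    _ ≤ K * δ := by
        rw [show (x - q y) - (x - y) = -(q y - y) by abel, norm_neg]
        gcongr
        exact hq y

lemma lintegral_enorm_comp_sub_sub_comp_sub_le [MeasurableAdd G] [μ.IsAddRightInvariant]
    (hg : LipschitzWith K g) (a b : G) :
    ∫⁻ x, ‖g (x - a) - g (x - b)‖ₑ ∂μ ≤ K * ‖a - b‖ₑ * (2 * μ (support g)) := by
  set S := (· - a) ⁻¹' support g ∪ (· - b) ⁻¹' support g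
  have hpt : ∀ x, ‖g (x - a) - g (x - b)‖ₑ ≤ S.indicator (fun _ => K * ‖a - b‖ₑ) x := by
    intro x
    by_cases hx : x ∈ S
    · rw [Set.indicator_of_mem hx, ← edist_eq_enorm_sub, ← edist_eq_enorm_sub,
        ← edist_sub_left x a b]
      exact hg.edist_le_mul _ _
    · obtain ⟨ha, hb⟩ := not_or.1 hx
      simp_all
  calc ∫⁻ x, ‖g (x - a) - g (x - b)‖ₑ ∂μ ≤ ∫⁻ x, S.indicator (fun _ => K * ‖a - b‖ₑ) x ∂μ :=
        lintegral_mono hpt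
    _ ≤ K * ‖a - b‖ₑ * μ S := lintegral_indicator_const_le _ _
    _ ≤ K * ‖a - b‖ₑ * (2 * μ (support g)) := by
        gcongr
        refine (measure_union_le _ _).trans_eq ?_
        simp only [sub_eq_add_neg, measure_preimage_add_right, two_mul]

lemma lintegral_enorm_integral_sub_comp_sub_mul_le [BorelSpace G] [SecondCountableTopology G]
    [SFinite μ] [μ.IsAddRightInvariant] (hg : LipschitzWith K g) (hq : ∀ y, ‖q y - y‖ ≤ δ)
    (hqm : Measurable q) (hω : AEMeasurable ω μ) :
    ∫⁻ x, ‖∫ y, (g (x - q y) - g (x - y)) * ω y ∂μ‖ₑ ∂μ ≤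
      K * ENNReal.ofReal δ * (2 * μ (support g)) * ∫⁻ y, ‖ω y‖ₑ ∂μ := by
  set F : G → G → ℝ≥0∞ := fun x y => ‖g (x - q y) - g (x - y)‖ₑ
  have hF : Measurable (uncurry F) :=
    ((hg.continuous.measurable.comp (measurable_fst.sub (hqm.comp measurable_snd))).sub
      (hg.continuous.measurable.comp (measurable_fst.sub measurable_snd))).enorm
  have hFy : ∀ y, ∫⁻ x, F x y ∂μ ≤ K * ENNReal.ofReal δ * (2 * μ (support g)) := fun y =>
    (lintegral_enorm_comp_sub_sub_comp_sub_le hg _ _).trans <| by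
      gcongr
      rw [← ofReal_norm]
      exact ENNReal.ofReal_le_ofReal (hq y)
  calc ∫⁻ x, ‖∫ y, (g (x - q y) - g (x - y)) * ω y ∂μ‖ₑ ∂μ
      ≤ ∫⁻ x, ∫⁻ y, F x y * ‖ω y‖ₑ ∂μ ∂μ := lintegral_mono fun x =>
        (enorm_integral_le_lintegral_enorm _).trans_eq (lintegral_congr fun y => enorm_mul _ _)
    _ = ∫⁻ y, (∫⁻ x, F x y ∂μ) * ‖ω y‖ₑ ∂μ := by
        rw [lintegral_lintegral_swap (hF.aemeasurable.mul
          (hω.enorm.comp_quasiMeasurePreserving Measure.quasiMeasurePreserving_snd))]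
        exact lintegral_congr fun y =>
          lintegral_mul_const'' _ (hF.comp measurable_prodMk_right).aemeasurable
    _ ≤ ∫⁻ y, K * ENNReal.ofReal δ * (2 * μ (support g)) * ‖ω y‖ₑ ∂μ := by
        gcongr with y
        exact hFy y
    _ = K * ENNReal.ofReal δ * (2 * μ (support g)) * ∫⁻ y, ‖ω y‖ₑ ∂μ :=
        lintegral_const_mul'' _ hω.enorm

end PerturbedConvolution

lemma eLpNorm_ofReal_le_rpow_mul_lintegral_enorm_rpow {α E : Type*} [MeasurableSpace α]
    {μ : Measure α} [NormedAddCommGroup E] {f : α → E} {M : ℝ≥0∞} {p : ℝ} (hM : M ≠ ∞)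
    (hfM : ∀ᵐ x ∂μ, ‖f x‖ₑ ≤ M) (hp : 1 ≤ p) :
    eLpNorm f (ENNReal.ofReal p) μ ≤ M ^ (1 - p⁻¹) * (∫⁻ x, ‖f x‖ₑ ∂μ) ^ p⁻¹ := by
  have hp0 : 0 < p := by linarith
  rw [eLpNorm_eq_lintegral_rpow_enorm_toReal (by simpa using hp0) ofReal_ne_top,
    toReal_ofReal hp0.le, one_div]
  calc (∫⁻ x, ‖f x‖ₑ ^ p ∂μ) ^ p⁻¹ ≤ (∫⁻ x, M ^ (p - 1) * ‖f x‖ₑ ∂μ) ^ p⁻¹ := by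
        refine rpow_le_rpow (lintegral_mono_ae (hfM.mono fun x hx => ?_)) (by positivity)
        calc ‖f x‖ₑ ^ p = ‖f x‖ₑ ^ (p - 1 + 1) := by rw [sub_add_cancel]
          _ = ‖f x‖ₑ ^ (p - 1) * ‖f x‖ₑ := by
              rw [rpow_add_of_nonneg _ _ (by linarith) zero_le_one, ENNReal.rpow_one]
          _ ≤ M ^ (p - 1) * ‖f x‖ₑ := by gcongr
    _ = M ^ (1 - p⁻¹) * (∫⁻ x, ‖f x‖ₑ ∂μ) ^ p⁻¹ := by
        rw [lintegral_const_mul' _ _ (rpow_ne_top_of_nonneg (by linarith) hM),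
          mul_rpow_of_nonneg _ _ (by positivity), ← ENNReal.rpow_mul]
        congr 2
        field_simp

lemma rpow_mul_rpow_le_add_mul_rpow {A B W ε p : ℝ} (hA : 0 ≤ A) (hB : 0 ≤ B) (hW : 0 ≤ W)
    (hε : 0 < ε) (hp : 1 ≤ p) :
    (A * W * ε) ^ (1 - p⁻¹) * (B * W * ε ^ 3) ^ p⁻¹ ≤ (A + B) * W * ε ^ (1 + 2 / p) := by
  have hp0 : 0 < p := by linarith
  have hb : p⁻¹ ≤ 1 := inv_le_one_of_one_le₀ hp
  have hb0 : 0 ≤ p⁻¹ := inv_nonneg.2 hp0.le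
  have hab : 1 - p⁻¹ + p⁻¹ = 1 := sub_add_cancel 1 p⁻¹
  have hW' : W ^ (1 - p⁻¹) * W ^ p⁻¹ = W := by
    rw [← Real.rpow_add' hW (by rw [hab]; exact one_ne_zero), hab, Real.rpow_one]
  have hε' : ε ^ (1 - p⁻¹) * ε ^ (3 * p⁻¹) = ε ^ (1 + 2 / p) := by
    rw [← Real.rpow_add hε]
    congr 1
    ring
  have hsplit : (A * W * ε) ^ (1 - p⁻¹) * (B * W * ε ^ 3) ^ p⁻¹ =
      A ^ (1 - p⁻¹) * B ^ p⁻¹ * (W * ε ^ (1 + 2 / p)) := by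
    rw [Real.mul_rpow (by positivity) hε.le, Real.mul_rpow hA hW,
      Real.mul_rpow (by positivity) (by positivity), Real.mul_rpow hB hW,
      ← Real.rpow_natCast ε 3, ← Real.rpow_mul hε.le, Nat.cast_ofNat]
    calc _ = A ^ (1 - p⁻¹) * B ^ p⁻¹ * (W ^ (1 - p⁻¹) * W ^ p⁻¹) *
          (ε ^ (1 - p⁻¹) * ε ^ (3 * p⁻¹)) := by ring
      _ = _ := by rw [hW', hε']; ring
  rw [hsplit, mul_assoc (A + B)]
  refine mul_le_mul_of_nonneg_right ?_ (mul_nonneg hW (Real.rpow_nonneg hε.le _))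
  calc A ^ (1 - p⁻¹) * B ^ p⁻¹ ≤ (1 - p⁻¹) * A + p⁻¹ * B :=
        Real.geom_mean_le_arith_mean2_weighted (by linarith) (by positivity) hA hB hab
    _ ≤ A + B := add_le_add (mul_le_of_le_one_left hA (by linarith))
        (mul_le_of_le_one_left hB hb)

noncomputable def blobIndex (ℓ : ℝ) (y : ℝ × ℝ) : ℤ × ℤ :=
  (⌊y.1 / ℓ + 1 / 2⌋, ⌊y.2 / ℓ + 1 / 2⌋)

def latticePoint (ℓ : ℝ) (i : ℤ × ℤ) : ℝ × ℝ := (ℓ * i.1, ℓ * i.2)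

lemma mem_Ico_iff_floor_eq {ℓ : ℝ} (hℓ : 0 < ℓ) (r : ℝ) (n : ℤ) :
    r ∈ Set.Ico (ℓ * n - ℓ / 2) (ℓ * n + ℓ / 2) ↔ ⌊r / ℓ + 1 / 2⌋ = n := by
  rw [Set.mem_Ico, Int.floor_eq_iff, div_add' _ _ _ hℓ.ne', le_div_iff₀ hℓ, div_lt_iff₀ hℓ]
  constructor <;> rintro ⟨h1, h2⟩ <;> constructor <;> linarith

lemma mem_blobSquare_iff {ℓ : ℝ} (hℓ : 0 < ℓ) (y : ℝ × ℝ) (i : ℤ × ℤ) :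
    y ∈ blobSquare ℓ i ↔ blobIndex ℓ y = i := by
  rw [blobSquare, Set.mem_prod, mem_Ico_iff_floor_eq hℓ, mem_Ico_iff_floor_eq hℓ, blobIndex,
    Prod.ext_iff]

lemma measurable_blobIndex (ℓ : ℝ) : Measurable (blobIndex ℓ) :=
  (Int.measurable_floor.comp ((measurable_fst.div_const ℓ).add_const _)).prodMk
    (Int.measurable_floor.comp ((measurable_snd.div_const ℓ).add_const _))

lemma measurable_latticePoint_blobIndex (ℓ : ℝ) :
    Measurable fun y => latticePoint ℓ (blobIndex ℓ y) :=
  (measurable_of_countable (latticePoint ℓ)).comp (measurable_blobIndex ℓ)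

lemma measurableSet_blobSquare (ℓ : ℝ) (i : ℤ × ℤ) : MeasurableSet (blobSquare ℓ i) :=
  measurableSet_Ico.prod measurableSet_Ico

lemma norm_latticePoint_blobIndex_sub_le {ℓ : ℝ} (hℓ : 0 < ℓ) (y : ℝ × ℝ) :
    ‖latticePoint ℓ (blobIndex ℓ y) - y‖ ≤ ℓ / 2 := by
  obtain ⟨⟨h₁, h₁'⟩, ⟨h₂, h₂'⟩⟩ := (mem_blobSquare_iff hℓ y _).2 rfl
  rw [Prod.norm_def, max_le_iff, Real.norm_eq_abs, Real.norm_eq_abs, abs_le, abs_le]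
  simp only [latticePoint, Prod.fst_sub, Prod.snd_sub]
  refine ⟨⟨?_, ?_⟩, ?_, ?_⟩ <;> linarith

lemma tsum_setIntegral_blobSquare_mul_eq_integral {ℓ : ℝ} (hℓ : 0 < ℓ) {ω f : ℝ × ℝ → ℝ}
    (hω : Integrable ω) {C : ℝ} (hf : ∀ z, ‖f z‖ ≤ C) :
    ∑' i, (∫ y in blobSquare ℓ i, ω y) * f (latticePoint ℓ i) =
      ∫ y, f (latticePoint ℓ (blobIndex ℓ y)) * ω y := by
  have hdisj : Pairwise (Disjoint on blobSquare ℓ) := fun i j hij =>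
    Set.disjoint_left.2 fun y hi hj =>
      hij (((mem_blobSquare_iff hℓ y i).1 hi).symm.trans ((mem_blobSquare_iff hℓ y j).1 hj))
  have hcover : ⋃ i, blobSquare ℓ i = Set.univ :=
    Set.eq_univ_of_forall fun y => Set.mem_iUnion.2 ⟨_, (mem_blobSquare_iff hℓ y _).2 rfl⟩
  have hint : Integrable fun y => f (latticePoint ℓ (blobIndex ℓ y)) * ω y :=
    hω.bdd_mul ((measurable_of_countable (f ∘ latticePoint ℓ)).comp
      (measurable_blobIndex ℓ)).aestronglyMeasurable (.of_forall fun y => hf _)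
  have hsum := hasSum_integral_iUnion (measurableSet_blobSquare ℓ) hdisj
    (by rw [hcover]; exact hint.integrableOn)
  rw [hcover, Measure.restrict_univ] at hsum
  refine Eq.trans (tsum_congr fun i => ?_) hsum.tsum_eq
  rw [← integral_mul_const]
  refine setIntegral_congr_fun (measurableSet_blobSquare ℓ i) fun y hy => ?_
  rw [(mem_blobSquare_iff hℓ y i).1 hy, mul_comm]

section Mollifier

variable {φ : ℝ × ℝ → ℝ}

lemma continuous_mollifier (hφ : Continuous φ) (ε : ℝ) : Continuous (mollifier φ ε) :=
  continuous_const.mul (hφ.comp (continuous_const_smul _))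

lemma exists_norm_mollifier_le (hφ : Continuous φ) (hφc : HasCompactSupport φ) (ε : ℝ) :
    ∃ C, ∀ x, ‖mollifier φ ε x‖ ≤ C := by
  obtain ⟨C, hC⟩ := hφ.bounded_above_of_compact_support hφc
  exact ⟨‖(ε ^ 2)⁻¹‖ * C, fun x => (norm_mul_le _ _).trans (by gcongr; exact hC _)⟩

lemma lipschitzWith_mollifier (hφ : ContDiff ℝ 1 φ) (hφc : HasCompactSupport φ) (ε : ℝ) :
    LipschitzWith ((⨆ z, ‖fderiv ℝ φ z‖₊) / ‖ε‖₊ ^ 3) (mollifier φ ε) := by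
  have hK : ‖(ε ^ 2)⁻¹‖₊ * ((⨆ z, ‖fderiv ℝ φ z‖₊) * ‖ε⁻¹‖₊) =
      (⨆ z, ‖fderiv ℝ φ z‖₊) / ‖ε‖₊ ^ 3 := by
    rw [nnnorm_inv, nnnorm_inv, nnnorm_pow, div_eq_mul_inv, pow_succ, mul_inv]
    ring
  rw [← hK]
  exact (lipschitzWith_smul (ε ^ 2)⁻¹).comp
    ((hφ.lipschitzWith_iSup_nnnorm_fderiv hφc).comp (lipschitzWith_smul ε⁻¹))

lemma volume_support_mollifier {ε : ℝ} (hε : ε ≠ 0) :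
    volume (support (mollifier φ ε)) = ENNReal.ofReal (ε ^ 2) * volume (support φ) := by
  have : support (mollifier φ ε) = ε • support φ := by
    rw [← support_comp_inv_smul₀ hε]
    exact support_const_smul_of_ne_zero _ _ (inv_ne_zero (pow_ne_zero 2 hε))
  rw [this, Measure.addHaar_smul, Module.finrank_prod, Module.finrank_self, abs_pow, sq_abs]

end Mollifier

section VortexBlob

variable {φ ω : ℝ × ℝ → ℝ} {ε : ℝ}

lemma integrable_mollifier_comp_mul (hφ : Continuous φ) (hφc : HasCompactSupport φ)
    (hω : Integrable ω) {g : ℝ × ℝ → ℝ × ℝ} (hg : Measurable g) :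
    Integrable fun y => mollifier φ ε (g y) * ω y := by
  obtain ⟨C, hC⟩ := exists_norm_mollifier_le hφ hφc ε
  exact hω.bdd_mul ((continuous_mollifier hφ ε).measurable.comp hg).aestronglyMeasurable
    (.of_forall fun y => hC _)

lemma blobApprox_sub_mollified_eq (hφ : Continuous φ) (hφc : HasCompactSupport φ)
    (hω : Integrable ω) (hε : 0 < ε) (x : ℝ × ℝ) :
    blobApprox φ ω ε x - mollified φ ω ε x =
      ∫ y, (mollifier φ ε (x - latticePoint (ε ^ 4) (blobIndex (ε ^ 4) y)) -
        mollifier φ ε (x - y)) * ω y := by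
  obtain ⟨C, hC⟩ := exists_norm_mollifier_le hφ hφc ε
  simp_rw [sub_mul]
  rw [integral_sub (integrable_mollifier_comp_mul hφ hφc hω
      ((measurable_latticePoint_blobIndex _).const_sub x))
    (integrable_mollifier_comp_mul hφ hφc hω (g := fun y => x - y) (by fun_prop)),
    ← tsum_setIntegral_blobSquare_mul_eq_integral (pow_pos hε 4) hω fun z => hC (x - z)]
  rfl

lemma abs_blobApprox_sub_mollified_le (hφ : ContDiff ℝ 1 φ) (hφc : HasCompactSupport φ)
    (hω : Integrable ω) (hε : 0 < ε) (x : ℝ × ℝ) :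
    |blobApprox φ ω ε x - mollified φ ω ε x| ≤
      ε / 2 * (⨆ z, ‖fderiv ℝ φ z‖) * ∫ y, |ω y| := by
  rw [blobApprox_sub_mollified_eq hφ.continuous hφc hω hε]
  refine (abs_integral_sub_comp_sub_mul_le (lipschitzWith_mollifier hφ hφc ε)
    (norm_latticePoint_blobIndex_sub_le (pow_pos hε 4)) hω x).trans_eq ?_
  rw [NNReal.coe_div, NNReal.coe_pow, NNReal.coe_iSup, coe_nnnorm, Real.norm_eq_abs,
    abs_of_pos hε]
  simp only [coe_nnnorm]
  field_simp

lemma lintegral_enorm_blobApprox_sub_mollified_le (hφ : ContDiff ℝ 1 φ)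
    (hφc : HasCompactSupport φ) (hω : Integrable ω) (hε : 0 < ε) :
    ∫⁻ x, ‖blobApprox φ ω ε x - mollified φ ω ε x‖ₑ ≤
      ENNReal.ofReal ((⨆ z, ‖fderiv ℝ φ z‖) * (volume (support φ)).toReal *
        (∫ y, |ω y|) * ε ^ 3) := by
  simp_rw [blobApprox_sub_mollified_eq hφ.continuous hφc hω hε]
  refine (lintegral_enorm_integral_sub_comp_sub_mul_le (lipschitzWith_mollifier hφ hφc ε)
    (norm_latticePoint_blobIndex_sub_le (pow_pos hε 4))
    (measurable_latticePoint_blobIndex _) hω.aemeasurable).trans_eq ?_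
  have hφfin : volume (support φ) ≠ ∞ :=
    (measure_mono (subset_tsupport φ)).trans_lt hφc.measure_lt_top |>.ne
  rw [volume_support_mollifier hε.ne', ← ofReal_toReal hφfin, toReal_ofReal toReal_nonneg,
    ← ofReal_integral_norm_eq_lintegral_enorm hω, ← ofReal_coe_nnreal]
  simp (disch := positivity) only [← ENNReal.ofReal_mul, ← ENNReal.ofReal_ofNat]
  congr 1
  rw [NNReal.coe_div, NNReal.coe_pow, NNReal.coe_iSup, coe_nnnorm, Real.norm_eq_abs,
    abs_of_pos hε]
  simp only [coe_nnnorm, Real.norm_eq_abs]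
  field_simp

lemma eLpNorm_blobApprox_sub_mollified_le (hφ : ContDiff ℝ 1 φ) (hφc : HasCompactSupport φ)
    (hω : Integrable ω) (hε : 0 < ε) {p : ℝ} (hp : 1 ≤ p) :
    eLpNorm (fun x => blobApprox φ ω ε x - mollified φ ω ε x) (ENNReal.ofReal p) volume ≤
      ENNReal.ofReal (((⨆ z, ‖fderiv ℝ φ z‖) + (⨆ z, ‖fderiv ℝ φ z‖) *
        (volume (support φ)).toReal) * (∫ y, |ω y|) * ε ^ (1 + 2 / p)) := by
  set L := ⨆ z, ‖fderiv ℝ φ z‖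
  set V := (volume (support φ)).toReal
  set W := ∫ y, |ω y|
  have hL : 0 ≤ L := Real.iSup_nonneg fun _ => norm_nonneg _
  have hW : 0 ≤ W := integral_nonneg fun _ => abs_nonneg _
  have hLWε : 0 ≤ L * W * ε := by positivity
  have hsup : ∀ x, ‖blobApprox φ ω ε x - mollified φ ω ε x‖ₑ ≤ ENNReal.ofReal (L * W * ε) :=
    fun x => by
      rw [← ofReal_norm, Real.norm_eq_abs]
      refine ofReal_le_ofReal ((abs_blobApprox_sub_mollified_le hφ hφc hω hε x).trans ?_)
      linarith
  calc eLpNorm (fun x => blobApprox φ ω ε x - mollified φ ω ε x) (ENNReal.ofReal p) volume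
      ≤ ENNReal.ofReal (L * W * ε) ^ (1 - p⁻¹) * ENNReal.ofReal (L * V * W * ε ^ 3) ^ p⁻¹ :=
        (eLpNorm_ofReal_le_rpow_mul_lintegral_enorm_rpow ofReal_ne_top (.of_forall hsup) hp).trans
          (by gcongr; exact lintegral_enorm_blobApprox_sub_mollified_le hφ hφc hω hε)
    _ = ENNReal.ofReal ((L * W * ε) ^ (1 - p⁻¹) * (L * V * W * ε ^ 3) ^ p⁻¹) := by
        rw [ofReal_rpow_of_nonneg hLWε (sub_nonneg.2 (inv_le_one_of_one_le₀ hp)),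
          ofReal_rpow_of_nonneg (by positivity) (by positivity), ← ofReal_mul (by positivity)]
    _ ≤ ENNReal.ofReal ((L + L * V) * W * ε ^ (1 + 2 / p)) :=
        ofReal_le_ofReal (rpow_mul_rpow_le_add_mul_rpow hL (by positivity) hW hε hp)

end VortexBlob

theorem vortex_blob_Linfty_and_Lp_estimate
    (φ : ℝ × ℝ → ℝ) (hφ : ContDiff ℝ 1 φ) (hφc : HasCompactSupport φ) :
    (∀ ω : ℝ × ℝ → ℝ, Integrable ω → ∀ ε ∈ Set.Ioo (0 : ℝ) 1, ∀ x,
        |blobApprox φ ω ε x - mollified φ ω ε x| ≤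
          Real.sqrt 2 * (ε ^ 4 / ε ^ 3) * (⨆ z, ‖fderiv ℝ φ z‖) * ∫ y, |ω y|) ∧
      ∃ C : ℝ, 0 < C ∧
        ∀ ω : ℝ × ℝ → ℝ, Integrable ω → ∀ ε ∈ Set.Ioo (0 : ℝ) 1, ∀ p : ℝ, 1 ≤ p →
          eLpNorm (fun x => blobApprox φ ω ε x - mollified φ ω ε x)
              (ENNReal.ofReal p) volume ≤
            ENNReal.ofReal (C * (∫ y, |ω y|) * ε ^ (1 + 2 / p)) := by
  set L := ⨆ z, ‖fderiv ℝ φ z‖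
  have hL : 0 ≤ L := Real.iSup_nonneg fun _ => norm_nonneg _
  have hW : ∀ ω : ℝ × ℝ → ℝ, 0 ≤ ∫ y, |ω y| := fun ω => integral_nonneg fun _ => abs_nonneg _
  refine ⟨fun ω hω ε hε x => (abs_blobApprox_sub_mollified_le hφ hφc hω hε.1 x).trans ?_,
    L + L * (volume (support φ)).toReal + 1, by positivity, fun ω hω ε hε p hp =>
      (eLpNorm_blobApprox_sub_mollified_le hφ hφc hω hε.1 hp).trans (ofReal_le_ofReal ?_)⟩
  · have := hε.1.le
    calc ε / 2 * L * ∫ y, |ω y| = 2⁻¹ * ε * L * ∫ y, |ω y| := by ring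
      _ ≤ √2 * ε * L * ∫ y, |ω y| := by gcongr; linarith [Real.one_lt_sqrt_two]
      _ = √2 * (ε ^ 4 / ε ^ 3) * L * ∫ y, |ω y| := by field_simp
  · have := hW ω
    have := Real.rpow_nonneg hε.1.le (1 + 2 / p)
    gcongr ?_ * _ * _
    linarith
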